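/- The action of the odd osp(1|2)-generator xD on powers of D̄ is given by: for all real λ, μ, every homogeneous density f ∈ F_λ (either parity), and every nonnegative integer r, (i) (xD + 2μξ)(D̄^{2r+1} f) + D̄^{2r+1}((xD + 2λξ) f) = (2λ + r)·D̄^{2r} f + (2μ − 2λ − 2r − 1)·ξ·D̄^{2r+1} f, and (ii) for r ≥ 1, (xD + 2μξ)(D̄^{2r} f) − D̄^{2r}((xD + 2λξ) f) = r·D̄^{2r−1} f + (2μ − 2λ − 2r)·ξ·D̄^{2r} f. -/

import Mathlib

/-- Homogeneous superfunction on the supercircle `S^{1|1}`: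
a pair `(f, ε)` representing `f(x)` if `ε = 0` and `ξ·f(x)` if `ε = 1`. -/
structure SF where
  fn : ℝ → ℝ
  par : ZMod 2

/-- Product of homogeneous superfunctions: `(f,ε)·(g,δ) = (f·g, ε+δ)`,
with `(f,1)·(g,1) = 0` since `ξ² = 0`. -/
noncomputable def SF.mul (f g : SF) : SF :=
  ⟨fun x => if f.par = 1 ∧ g.par = 1 then 0 else f.fn x * g.fn x, f.par + g.par⟩

noncomputable def SF.smul (c : ℝ) (f : SF) : SF := ⟨fun x => c * f.fn x, f.par⟩

noncomputable def SF.add (f g : SF) : SF := ⟨fun x => f.fn x + g.fn x, f.par⟩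

noncomputable def SF.sub (f g : SF) : SF := ⟨fun x => f.fn x - g.fn x, f.par⟩

noncomputable def SF.neg (f : SF) : SF := ⟨fun x => - f.fn x, f.par⟩

/-- Even derivative `(f,ε)' = (f',ε)`. -/
noncomputable def SF.dx (f : SF) : SF := ⟨deriv f.fn, f.par⟩

/-- The odd derivative `D̄ = ∂_ξ - ξ ∂_x`: `D̄(f,0) = (-f',1)`, `D̄(f,1) = (f,0)`. -/
noncomputable def Dbar (f : SF) : SF :=
  if f.par = 0 then ⟨fun x => - deriv f.fn x, 1⟩ else ⟨f.fn, 0⟩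

/-- `(-1)^ε`. -/
def sgn (e : ZMod 2) : ℝ := if e = 0 then 1 else -1

/-- `(-1)^(a·b)`. -/
def sgn2 (a b : ZMod 2) : ℝ := if a = 1 ∧ b = 1 then -1 else 1

/-- The first supertransvectant (contact bracket)
`[f,g] = μ f′ g − λ f g′ − (−1)^{σ(f)} (1/2) D̄(f)·D̄(g)` on `F_λ ⊗ F_μ`. -/
noncomputable def cbr (l m : ℝ) (f g : SF) : SF :=
  SF.sub (SF.sub (SF.smul m (SF.mul f.dx g)) (SF.smul l (SF.mul f g.dx)))
    (SF.smul (sgn f.par * (1/2)) (SF.mul (Dbar f) (Dbar g)))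

/-- The odd supertransvectant (ghost bracket)
`(f,g) = μ D̄(f)·g − (−1)^{σ(f)} λ f·D̄(g)` on `F_λ ⊗ F_μ`. -/
noncomputable def gbr (l m : ℝ) (f g : SF) : SF :=
  SF.sub (SF.smul m (SF.mul (Dbar f) g)) (SF.smul (sgn f.par * l) (SF.mul f (Dbar g)))


/-- The action of `xD` (with `D = ∂_ξ + ξ∂_x`): `xD(f,0) = (xf′,1)`, `xD(f,1) = (xf,0)`. -/
noncomputable def xD (f : SF) : SF :=
  if f.par = 0 then ⟨fun x => x * deriv f.fn x, 1⟩ else ⟨fun x => x * f.fn x, 0⟩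

/-- Multiplication by `ξ`: `(f,0) ↦ (f,1)`, `(f,1) ↦ 0`. -/
noncomputable def xiMul (f : SF) : SF :=
  if f.par = 0 then ⟨f.fn, 1⟩ else ⟨fun _ => 0, 0⟩

/-- The operator `xD + 2νξ`, the Lie derivative of `ν`-densities along `xD`. -/
noncomputable def LxD (v : ℝ) (f : SF) : SF := SF.add (xD f) (SF.smul (2 * v) (xiMul f))


private lemma diffIter {g : ℝ → ℝ} (hg : ContDiff ℝ (⊤ : ℕ∞) g) (n : ℕ) :
    Differentiable ℝ (iteratedDeriv n g) :=
  hg.differentiable_iteratedDeriv n (by exact_mod_cast lt_top_iff_ne_top.2 (by simp))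

/-- Combined Leibniz: `(x·g' + c·g)^{(r)} = x·g^{(r+1)} + (r+c)·g^{(r)}`. -/
private lemma key1 {g : ℝ → ℝ} (hg : ContDiff ℝ (⊤ : ℕ∞) g) (c : ℝ) (r : ℕ) :
    iteratedDeriv r (fun x => x * deriv g x + c * g x)
      = fun x => x * iteratedDeriv (r + 1) g x + ((r : ℝ) + c) * iteratedDeriv r g x := by
  induction r with
  | zero =>
    funext x
    simp [iteratedDeriv_one, iteratedDeriv_zero]
  | succ r ih =>
    rw [iteratedDeriv_succ, ih]
    funext x
    have h1 : DifferentiableAt ℝ (fun x => x * iteratedDeriv (r + 1) g x) x :=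
      (differentiableAt_fun_id).mul ((diffIter hg (r + 1)) x)
    have h2 : DifferentiableAt ℝ (fun x => ((r : ℝ) + c) * iteratedDeriv r g x) x :=
      ((diffIter hg r) x).const_mul _
    rw [deriv_fun_add h1 h2, deriv_fun_mul differentiableAt_fun_id ((diffIter hg (r + 1)) x),
      deriv_const_mul_field, ← iteratedDeriv_succ, ← iteratedDeriv_succ]
    simp only [deriv_id'']
    push_cast
    ring

private lemma key2 {g : ℝ → ℝ} (hg : ContDiff ℝ (⊤ : ℕ∞) g) (r : ℕ) :
    iteratedDeriv (r + 1) (fun x => x * g x)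
      = fun x => x * iteratedDeriv (r + 1) g x + ((r : ℝ) + 1) * iteratedDeriv r g x := by
  rw [iteratedDeriv_succ']
  have h : (deriv fun x => x * g x) = fun x => x * deriv g x + 1 * g x := by
    funext x
    rw [deriv_fun_mul differentiableAt_fun_id ((hg.differentiable (by simp)) x)]
    simp only [deriv_id'']
    ring
  rw [h, key1 hg 1 r]

private lemma SF_ext {F G : ℝ → ℝ} {p q : ZMod 2} (h : ∀ x, F x = G x) (hp : p = q) :
    (⟨F, p⟩ : SF) = ⟨G, q⟩ := by
  subst hp
  congr 1
  exact funext h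

private lemma Dbar_Dbar (f : SF) : Dbar (Dbar f) = ⟨fun x => -deriv f.fn x, f.par⟩ := by
  rcases f with ⟨g, e⟩
  have he : e = 0 ∨ e = 1 := by revert e; decide
  rcases he with rfl | rfl <;> simp [Dbar]

private lemma iter_even (f : SF) (r : ℕ) :
    Dbar^[2 * r] f = ⟨fun x => (-1 : ℝ) ^ r * iteratedDeriv r f.fn x, f.par⟩ := by
  induction r with
  | zero =>
    rcases f with ⟨g, e⟩
    simp [iteratedDeriv_zero]
  | succ r ih =>
    have h2 : 2 * (r + 1) = (2 * r + 1) + 1 := by ring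
    rw [h2, Function.iterate_succ_apply', Function.iterate_succ_apply', ih, Dbar_Dbar]
    refine SF_ext (fun x => ?_) rfl
    simp only [deriv_const_mul_field, ← iteratedDeriv_succ]
    ring

private lemma iter_even0 (g : ℝ → ℝ) (r : ℕ) :
    Dbar^[2 * r] (⟨g, 0⟩ : SF) = ⟨fun x => (-1 : ℝ) ^ r * iteratedDeriv r g x, 0⟩ :=
  iter_even ⟨g, 0⟩ r

private lemma iter_even1 (g : ℝ → ℝ) (r : ℕ) :
    Dbar^[2 * r] (⟨g, 1⟩ : SF) = ⟨fun x => (-1 : ℝ) ^ r * iteratedDeriv r g x, 1⟩ :=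
  iter_even ⟨g, 1⟩ r

private lemma iter_odd0 (g : ℝ → ℝ) (r : ℕ) :
    Dbar^[2 * r + 1] (⟨g, 0⟩ : SF)
      = ⟨fun x => -((-1 : ℝ) ^ r * iteratedDeriv (r + 1) g x), 1⟩ := by
  rw [Function.iterate_succ_apply', iter_even0]
  simp only [Dbar, if_pos rfl]
  refine SF_ext (fun x => ?_) rfl
  simp only [deriv_const_mul_field, ← iteratedDeriv_succ]

private lemma iter_odd1 (g : ℝ → ℝ) (r : ℕ) :
    Dbar^[2 * r + 1] (⟨g, 1⟩ : SF)
      = ⟨fun x => (-1 : ℝ) ^ r * iteratedDeriv r g x, 0⟩ := by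
  rw [Function.iterate_succ_apply', iter_even1]
  simp [Dbar]

private lemma LxD0 (v : ℝ) (g : ℝ → ℝ) :
    LxD v (⟨g, 0⟩ : SF) = ⟨fun x => x * deriv g x + 2 * v * g x, 1⟩ := by
  simp [LxD, xD, xiMul, SF.add, SF.smul]

private lemma LxD1 (v : ℝ) (g : ℝ → ℝ) :
    LxD v (⟨g, 1⟩ : SF) = ⟨fun x => x * g x, 0⟩ := by
  simp [LxD, xD, xiMul, SF.add, SF.smul]

/-- the action of the odd osp(1|2)-generator `xD` on powers of `D̄`:
(i) `(xD+2μξ)(D̄^{2r+1}f) + D̄^{2r+1}((xD+2λξ)f)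
      = (2λ+r) D̄^{2r}f + (2μ−2λ−2r−1) ξ D̄^{2r+1}f`, and
(ii) for `r ≥ 1`, `(xD+2μξ)(D̄^{2r}f) − D̄^{2r}((xD+2λξ)f)
      = r D̄^{2r−1}f + (2μ−2λ−2r) ξ D̄^{2r}f`. -/
theorem xD_action_on_Dbar_powers (l m : ℝ) (f : SF) (hf : ContDiff ℝ (⊤ : ℕ∞) f.fn) (r : ℕ) :
    (SF.add (LxD m (Dbar^[2 * r + 1] f)) (Dbar^[2 * r + 1] (LxD l f))
      = SF.add (SF.smul (2 * l + (r : ℝ)) (Dbar^[2 * r] f))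
          (SF.smul (2 * m - 2 * l - 2 * (r : ℝ) - 1) (xiMul (Dbar^[2 * r + 1] f)))) ∧
    (1 ≤ r →
      SF.sub (LxD m (Dbar^[2 * r] f)) (Dbar^[2 * r] (LxD l f))
        = SF.add (SF.smul (r : ℝ) (Dbar^[2 * r - 1] f))
            (SF.smul (2 * m - 2 * l - 2 * (r : ℝ)) (xiMul (Dbar^[2 * r] f)))) := by
  rcases f with ⟨g, e⟩
  simp only at hf
  have he : e = 0 ∨ e = 1 := by revert e; decide
  rcases he with rfl | rfl
  · -- parity 0
    constructor
    · rw [LxD0, iter_odd0, iter_odd1, iter_even0]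
      simp only [LxD, xD, xiMul, SF.add, SF.smul, if_neg (by decide : ¬ (1 : ZMod 2) = 0),
        if_pos rfl]
      refine SF_ext (fun x => ?_) rfl
      rw [key1 hf (2 * l) r]
      simp only [deriv.neg, deriv_const_mul_field, ← iteratedDeriv_succ]
      ring
    · intro hr
      obtain ⟨s, rfl⟩ : ∃ s, r = s + 1 := ⟨r - 1, (Nat.succ_pred_eq_of_pos hr).symm⟩
      have h21 : 2 * (s + 1) - 1 = 2 * s + 1 := by omega
      rw [LxD0, h21, iter_even0, iter_even1, iter_odd0]
      simp only [LxD, xD, xiMul, SF.add, SF.smul, SF.sub,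
        if_neg (by decide : ¬ (1 : ZMod 2) = 0), if_pos rfl]
      refine SF_ext (fun x => ?_) rfl
      rw [key1 hf (2 * l) (s + 1)]
      simp only [deriv.neg, deriv_const_mul_field, ← iteratedDeriv_succ]
      push_cast
      ring
  · -- parity 1
    constructor
    · rw [LxD1, iter_odd1, iter_odd0, iter_even1]
      simp only [LxD, xD, xiMul, SF.add, SF.smul, if_neg (by decide : ¬ (1 : ZMod 2) = 0),
        if_pos rfl]
      refine SF_ext (fun x => ?_) rfl
      rw [key2 hf r]
      simp only [deriv.neg, deriv_const_mul_field, ← iteratedDeriv_succ]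
      push_cast
      ring
    · intro hr
      obtain ⟨s, rfl⟩ : ∃ s, r = s + 1 := ⟨r - 1, (Nat.succ_pred_eq_of_pos hr).symm⟩
      have h21 : 2 * (s + 1) - 1 = 2 * s + 1 := by omega
      rw [LxD1, h21, iter_even1, iter_even0, iter_odd1]
      simp only [LxD, xD, xiMul, SF.add, SF.smul, SF.sub,
        if_neg (by decide : ¬ (1 : ZMod 2) = 0), if_pos rfl]
      refine SF_ext (fun x => ?_) rfl
      rw [key2 hf s]
      simp only [deriv.neg, deriv_const_mul_field, ← iteratedDeriv_succ]
      push_cast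
      ring
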